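/- Let C ⊆ ℕ and let A, B ⊆ ℕ be infinite sets. Let H(A,B) be the bifamily of all pairs (E,F) of finite sets with E ⊆ ℕ∖A and F ⊆ ℕ∖B. Then A and B are both C-hyperimmune if and only if H(A,B) is C-2-hyperimmune. -/

import Mathlib

namespace Paper

/-- `RecIn O f` : the partial function `f` is partial recursive relative to the oracle `O`.
This is the inductive definition of oracle computability, mirroring `Nat.Partrec`
with an extra constructor for the oracle. -/
inductive RecIn (O : ℕ →. ℕ) : (ℕ →. ℕ) → Prop
  | oracle : RecIn O O
  | zero : RecIn O (pure 0)
  | succ : RecIn O Nat.succ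
  | left : RecIn O ↑fun n : ℕ => n.unpair.1
  | right : RecIn O ↑fun n : ℕ => n.unpair.2
  | pair {f g} : RecIn O f → RecIn O g → RecIn O fun n => Nat.pair <$> f n <*> g n
  | comp {f g} : RecIn O f → RecIn O g → RecIn O fun n => g n >>= f
  | prec {f g} : RecIn O f → RecIn O g → RecIn O (Nat.unpaired fun a n =>
      n.rec (f a) fun y IH => do let i ← IH; g (Nat.pair a (Nat.pair y i)))
  | rfind {f} : RecIn O f → RecIn O fun a =>
      Nat.rfind fun n => (fun m => m = 0) <$> f (Nat.pair a n)

/-- Characteristic function of a set of naturals. -/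
noncomputable def chi (C : Set ℕ) : ℕ → ℕ := C.indicator fun _ => 1

/-- A (total) function `f : ℕ → ℕ` is Turing reducible to the set `C`. -/
noncomputable def FunRecIn (C : Set ℕ) (f : ℕ → ℕ) : Prop := RecIn (chi C) f

/-- A set `A` is Turing reducible to the set `C`. -/
noncomputable def SetRecIn (C A : Set ℕ) : Prop := FunRecIn C (chi A)

/-- Turing join of two sets. -/
def join (A B : Set ℕ) : Set ℕ :=
  {n | (∃ k ∈ A, n = 2 * k) ∨ (∃ k ∈ B, n = 2 * k + 1)}

/-- A bifamily: a collection of pairs of finite sets closed downward under the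
product subset relation. -/
def Bifamily (H : Set (Finset ℕ × Finset ℕ)) : Prop :=
  ∀ C D E F : Finset ℕ, (C, D) ∈ H → E ⊆ C → F ⊆ D → (E, F) ∈ H

/-- The pair of maps `(E, F)` forms a biarray. -/
def IsBiarray (E : ℕ → Finset ℕ) (F : ℕ → ℕ → Finset ℕ) : Prop :=
  (∀ n x, x ∈ E n → n < x) ∧ (∀ n m x, x ∈ F n m → m < x)

/-- The biarray `(E, F)` is Turing reducible to `C` (via canonical indices of finite sets). -/
noncomputable def BiarrayRecIn (C : Set ℕ) (E : ℕ → Finset ℕ) (F : ℕ → ℕ → Finset ℕ) : Prop :=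
  FunRecIn C (fun n => Encodable.encode (E n)) ∧
  FunRecIn C (fun p => Encodable.encode (F p.unpair.1 p.unpair.2))

/-- The biarray `(E, F)` meets the bifamily `H`. -/
def Meets (H : Set (Finset ℕ × Finset ℕ)) (E : ℕ → Finset ℕ) (F : ℕ → ℕ → Finset ℕ) : Prop :=
  ∃ n m, (E n, F n m) ∈ H

/-- The bifamily `H` is `C`-2-hyperimmune: every `C`-computable biarray meets `H`. -/
noncomputable def Is2HyperimmuneIn (C : Set ℕ) (H : Set (Finset ℕ × Finset ℕ)) : Prop :=
  ∀ E : ℕ → Finset ℕ, ∀ F : ℕ → ℕ → Finset ℕ,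
    IsBiarray E F → BiarrayRecIn C E F → Meets H E F

/-- The set `A` is `C`-hyperimmune. -/
noncomputable def HyperimmuneIn (C : Set ℕ) (A : Set ℕ) : Prop :=
  ∀ V : ℕ → Finset ℕ, (∀ n x, x ∈ V n → n < x) →
    FunRecIn C (fun n => Encodable.encode (V n)) →
    ∃ n, ∀ x ∈ V n, x ∉ A

/-- `G` is thin for the coloring `f` of `n`-element sets with `k` colors. -/
def Thin (n k : ℕ) (f : Finset ℕ → ℕ) (G : Set ℕ) : Prop :=
  ∃ i < k, ∀ σ : Finset ℕ, ↑σ ⊆ G → σ.card = n → f σ ≠ i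

/-- `G` is free for the coloring `f` of `n`-element sets. -/
def Free (n : ℕ) (f : Finset ℕ → ℕ) (G : Set ℕ) : Prop :=
  ∀ σ : Finset ℕ, ↑σ ⊆ G → σ.card = n → f σ ∈ G → f σ ∈ σ

/-- The coloring `f` (of finite sets) is Turing reducible to `C`,
via the canonical coding of finite sets. -/
noncomputable def ColorRecIn (C : Set ℕ) (f : Finset ℕ → ℕ) : Prop :=
  FunRecIn C (fun x => f (((Encodable.decode x : Option (Finset ℕ))).getD ∅))

/-- A coloring of pairs is stable if `lim_s f(x, s)` exists for every `x`. -/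
def StableColoring (f : Finset ℕ → ℕ) : Prop :=
  ∀ x, ∃ i, ∃ N, ∀ s, N ≤ s → f {x, s} = i

/-- `C_i(f)` : the set of `x` such that `f(x, s) = i` for all but finitely many `s`. -/
def Climit (f : Finset ℕ → ℕ) (i : ℕ) : Set ℕ :=
  {x | ∃ N, ∀ s, N ≤ s → f {x, s} = i}

/-- `T` is a tournament: irreflexive and exactly one of `T x y`, `T y x` for `x ≠ y`. -/
def Tournament (T : ℕ → ℕ → Prop) : Prop :=
  (∀ x, ¬ T x x) ∧ ∀ x y, x ≠ y → Xor' (T x y) (T y x)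

/-- `H` is `T`-transitive. -/
def TransitiveIn (T : ℕ → ℕ → Prop) (H : Set ℕ) : Prop :=
  ∀ x ∈ H, ∀ y ∈ H, ∀ z ∈ H, T x y → T y z → T x z

/-- A tournament is stable if every `x` beats, or is beaten by, all but finitely many `y`. -/
def StableTournament (T : ℕ → ℕ → Prop) : Prop :=
  ∀ x, {y | ¬ T x y}.Finite ∨ {y | ¬ T y x}.Finite

/-- Coding of a binary relation on `ℕ` as a set of naturals. -/
def codeRel (T : ℕ → ℕ → Prop) : Set ℕ := {n | T n.unpair.1 n.unpair.2}

/-- The relation `T` is Turing reducible to `C`. -/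
noncomputable def RelRecIn (C : Set ℕ) (T : ℕ → ℕ → Prop) : Prop :=
  FunRecIn C (chi (codeRel T))

/-- `A →_T B`. -/
def Arrow (T : ℕ → ℕ → Prop) (A B : Set ℕ) : Prop := ∀ x ∈ A, ∀ y ∈ B, T x y

/-- The tournament `T` diagonalizes against the pair `(A, B)`. -/
def DiagAgainst (T : ℕ → ℕ → Prop) (A B : Set ℕ) : Prop :=
  Arrow T A B ∧ {x | ¬ (Arrow T B {x} ∧ Arrow T {x} A)}.Finite

/-- The maps form a 4-array. -/
def Is4Array (E : ℕ → Finset ℕ) (E' : ℕ → ℕ → ℕ → Finset ℕ)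
    (F : ℕ → ℕ → Finset ℕ) (F' : ℕ → ℕ → ℕ → Finset ℕ) : Prop :=
  (∀ n x, x ∈ E n → n < x) ∧ (∀ n m l x, x ∈ E' n m l → m < x) ∧
  (∀ n m x, x ∈ F n m → n < x) ∧ (∀ n m l x, x ∈ F' n m l → l < x)

/-- The 4-array is Turing reducible to `C`. -/
noncomputable def FourArrayRecIn (C : Set ℕ) (E : ℕ → Finset ℕ) (E' : ℕ → ℕ → ℕ → Finset ℕ)
    (F : ℕ → ℕ → Finset ℕ) (F' : ℕ → ℕ → ℕ → Finset ℕ) : Prop :=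
  FunRecIn C (fun n => Encodable.encode (E n)) ∧
  FunRecIn C (fun p => Encodable.encode (E' p.unpair.1 p.unpair.2.unpair.1 p.unpair.2.unpair.2)) ∧
  FunRecIn C (fun p => Encodable.encode (F p.unpair.1 p.unpair.2)) ∧
  FunRecIn C (fun p => Encodable.encode (F' p.unpair.1 p.unpair.2.unpair.1 p.unpair.2.unpair.2))

/-- The pair of tournaments `(T₀, T₁)` is `C`-4-hyperimmune. -/
noncomputable def Is4HyperimmuneIn (C : Set ℕ) (T₀ T₁ : ℕ → ℕ → Prop) : Prop :=
  ∀ E : ℕ → Finset ℕ, ∀ E' : ℕ → ℕ → ℕ → Finset ℕ,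
  ∀ F : ℕ → ℕ → Finset ℕ, ∀ F' : ℕ → ℕ → ℕ → Finset ℕ,
    Is4Array E E' F F' → FourArrayRecIn C E E' F F' →
    ∃ n m l, DiagAgainst T₀ ↑(E n) ↑(E' n m l) ∧ DiagAgainst T₁ ↑(F n m) ↑(F' n m l)

/-- `A ⊆* B` : inclusion up to finitely many elements. -/
def SubsetStar (A B : Set ℕ) : Prop := (A \ B).Finite

/-- `G` is cohesive for the sequence `R`. -/
def Cohesive (R : ℕ → Set ℕ) (G : Set ℕ) : Prop :=
  G.Infinite ∧ ∀ i, SubsetStar G (R i) ∨ SubsetStar G (R i)ᶜ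

/-- Coding of a sequence of sets as a single set. -/
def codeSeq (R : ℕ → Set ℕ) : Set ℕ := {n | n.unpair.2 ∈ R n.unpair.1}

/-- Coding of a set of binary strings (e.g. a binary tree) as a set of naturals. -/
def codeTree (Tr : Set (List Bool)) : Set ℕ := {n | ∃ l ∈ Tr, Encodable.encode l = n}

/-- `Tr` is a binary tree: a set of binary strings closed under prefixes. -/
def IsTree (Tr : Set (List Bool)) : Prop := ∀ l ∈ Tr, ∀ l' : List Bool, l' <+: l → l' ∈ Tr

/-- `P` is an infinite path through `Tr`. -/
def IsPath (Tr : Set (List Bool)) (P : ℕ → Bool) : Prop :=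
  ∀ k, (List.ofFn fun i : Fin k => P i) ∈ Tr

/-- Coding of a coloring of finite sets as a set of naturals (its graph). -/
def codeColor (f : Finset ℕ → ℕ) : Set ℕ :=
  {n | ∃ σ : Finset ℕ, n = Nat.pair (Encodable.encode σ) (f σ)}

/-- `L` is a (strict) linear order on `ℕ`. -/
def LinearOrderRel (L : ℕ → ℕ → Prop) : Prop :=
  (∀ x, ¬ L x x) ∧ (∀ x y z, L x y → L y z → L x z) ∧ (∀ x y, x ≠ y → L x y ∨ L y x)

/-- `L` has order type `ω + ω*`. -/
def OmegaPlusOmegaStar (L : ℕ → ℕ → Prop) : Prop :=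
  ∃ A B : Set ℕ, (∀ x, x ∈ A ↔ x ∉ B) ∧
    (∀ a ∈ A, {y | L y a}.Finite) ∧ (∀ b ∈ B, {y | L b y}.Finite) ∧
    (∀ a ∈ A, ∀ b ∈ B, L a b)

/-- `S` is an ascending sequence for `L`. -/
def Ascending (L : ℕ → ℕ → Prop) (S : Set ℕ) : Prop :=
  ∀ x ∈ S, ∀ y ∈ S, x < y → L x y

/-- `S` is a descending sequence for `L`. -/
def Descending (L : ℕ → ℕ → Prop) (S : Set ℕ) : Prop :=
  ∀ x ∈ S, ∀ y ∈ S, x < y → L y x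

/-! Both directions are direct reductions. Given a `C`-computable biarray `(E, F)`,
hyperimmunity of `A` against `E` yields `n` with `E n` disjoint from `A`, and then
hyperimmunity of `B` against the computable row `F n ·` yields `m` with `F n m` disjoint
from `B`. Conversely, an array `V` against `A` (resp. `B`) is turned into the biarray
`(V, ∅)` (resp. `(∅, V)`). -/

def avoidingBifamily (A B : Set ℕ) : Set (Finset ℕ × Finset ℕ) :=
  {p | ↑p.1 ⊆ Aᶜ ∧ ↑p.2 ⊆ Bᶜ}

theorem RecIn.of_partrec {O f : ℕ →. ℕ} (h : Nat.Partrec f) : RecIn O f := by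
  induction h with
  | zero => exact RecIn.zero
  | succ => exact RecIn.succ
  | left => exact RecIn.left
  | right => exact RecIn.right
  | pair _ _ ihf ihg => exact RecIn.pair ihf ihg
  | comp _ _ ihf ihg => exact RecIn.comp ihf ihg
  | prec _ _ ihf ihg => exact RecIn.prec ihf ihg
  | rfind _ ihf => exact RecIn.rfind ihf

theorem FunRecIn.comp {C : Set ℕ} {f g : ℕ → ℕ} (hf : FunRecIn C f) (hg : Computable g) :
    FunRecIn C (fun n => f (g n)) := by
  have hcomp := RecIn.comp hf (RecIn.of_partrec (O := chi C) (Partrec.nat_iff.mp hg))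
  have hbind : (fun n => (g : ℕ →. ℕ) n >>= (f : ℕ →. ℕ)) =
      ((fun n => f (g n) : ℕ → ℕ) : ℕ →. ℕ) :=
    funext fun n => Part.bind_some (g n) (f : ℕ →. ℕ)
  unfold FunRecIn
  rwa [hbind] at hcomp

theorem FunRecIn.const (C : Set ℕ) (c : ℕ) : FunRecIn C (fun _ => c) :=
  RecIn.of_partrec (Partrec.nat_iff.mp (Computable.const c))

theorem is2HyperimmuneIn_avoidingBifamily {C A B : Set ℕ} (hA : HyperimmuneIn C A)
    (hB : HyperimmuneIn C B) : Is2HyperimmuneIn C (avoidingBifamily A B) := by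
  rintro E F ⟨hE, hF⟩ ⟨hEc, hFc⟩
  obtain ⟨n, hn⟩ := hA E hE hEc
  have hrow : FunRecIn C (fun m => Encodable.encode (F n m)) := by
    simpa using hFc.comp (Primrec₂.natPair.comp (Primrec.const n) Primrec.id).to_comp
  obtain ⟨m, hm⟩ := hB (F n) (hF n) hrow
  exact ⟨n, m, hn, hm⟩

theorem HyperimmuneIn.of_is2HyperimmuneIn_left {C A B : Set ℕ}
    (h : Is2HyperimmuneIn C (avoidingBifamily A B)) : HyperimmuneIn C A := by
  intro V hV hVc
  obtain ⟨n, _, hn⟩ := h V (fun _ _ => ∅) ⟨hV, by simp⟩ ⟨hVc, FunRecIn.const C _⟩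
  exact ⟨n, hn.1⟩

theorem HyperimmuneIn.of_is2HyperimmuneIn_right {C A B : Set ℕ}
    (h : Is2HyperimmuneIn C (avoidingBifamily A B)) : HyperimmuneIn C B := by
  intro V hV hVc
  obtain ⟨_, m, hm⟩ := h (fun _ => ∅) (fun _ m => V m) ⟨by simp, fun _ => hV⟩
    ⟨FunRecIn.const C _, hVc.comp (Primrec.snd.comp Primrec.unpair).to_comp⟩
  exact ⟨m, hm.2⟩

theorem hyperimmune_iff_bifamily_two_hyperimmune_general (C A B : Set ℕ) :
    (HyperimmuneIn C A ∧ HyperimmuneIn C B) ↔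
      Is2HyperimmuneIn C {p : Finset ℕ × Finset ℕ | ↑p.1 ⊆ Aᶜ ∧ ↑p.2 ⊆ Bᶜ} :=
  ⟨fun h => is2HyperimmuneIn_avoidingBifamily h.1 h.2, fun h =>
    ⟨HyperimmuneIn.of_is2HyperimmuneIn_left h, HyperimmuneIn.of_is2HyperimmuneIn_right h⟩⟩

theorem hyperimmune_iff_bifamily_two_hyperimmune (C A B : Set ℕ)
    (hA : A.Infinite) (hB : B.Infinite) :
    (HyperimmuneIn C A ∧ HyperimmuneIn C B) ↔
      Is2HyperimmuneIn C {p : Finset ℕ × Finset ℕ | ↑p.1 ⊆ Aᶜ ∧ ↑p.2 ⊆ Bᶜ} :=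
  hyperimmune_iff_bifamily_two_hyperimmune_general C A B

end Paper
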